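/- arXiv:2309.09098 — 8 statements merged into one kernel-verified Lean document; each statement's English description precedes it below -/
import Mathlib

section
/- Let E be a finite set and let x : E → ℝ satisfy 0 ≤ x_e ≤ 1 for all e ∈ E. Then 1 − ∏_{e∈E}(1 − x_e) ≥ (1 − 1/e) · min(1, Σ_{e∈E} x_e), where e denotes Euler's number. (In particular, ∏_{e∈E}(1 − x_e) ≤ exp(−Σ_{e∈E} x_e).) -/
open Real Finset

theorem Finset.prod_one_sub_le_exp_neg_sum {ι : Type*} (s : Finset ι) {x : ι → ℝ}
    (hx : ∀ i ∈ s, x i ≤ 1) : ∏ i ∈ s, (1 - x i) ≤ exp (-∑ i ∈ s, x i) := by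
  rw [← sum_neg_distrib, exp_sum]
  refine prod_le_prod (fun i hi => sub_nonneg.2 (hx i hi)) fun i _ => ?_
  linarith [add_one_le_exp (-x i)]

/-- The chord of the convex function `t ↦ exp (-t)` over `[0, 1]` lies above its graph. -/
theorem Real.exp_neg_le_one_sub_mul {t : ℝ} (ht₀ : 0 ≤ t) (ht₁ : t ≤ 1) :
    exp (-t) ≤ 1 - (1 - exp (-1)) * t := by
  have hchord := convexOn_exp.2 (Set.mem_univ 0) (Set.mem_univ (-1)) (sub_nonneg.2 ht₁) ht₀
    (sub_add_cancel 1 t)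
  simp only [smul_eq_mul, mul_zero, zero_add, exp_zero, mul_one, mul_neg_one] at hchord
  linarith

theorem Real.mul_min_one_le_one_sub_exp_neg {t : ℝ} (ht : 0 ≤ t) :
    (1 - exp (-1)) * min 1 t ≤ 1 - exp (-t) := by
  rcases le_total 1 t with h | h
  · rw [min_eq_left h, mul_one]
    linarith [exp_le_exp.2 (neg_le_neg h)]
  · rw [min_eq_right h]
    linarith [exp_neg_le_one_sub_mul ht h]

theorem stmt_0 {α : Type*} (E : Finset α) (x : α → ℝ)
    (hx : ∀ e ∈ E, 0 ≤ x e ∧ x e ≤ 1) :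
    1 - ∏ e ∈ E, (1 - x e) ≥ (1 - 1 / Real.exp 1) * min 1 (∑ e ∈ E, x e) ∧
    ∏ e ∈ E, (1 - x e) ≤ Real.exp (-∑ e ∈ E, x e) := by
  have hsum : 0 ≤ ∑ e ∈ E, x e := sum_nonneg fun e he => (hx e he).1
  have hprod := E.prod_one_sub_le_exp_neg_sum fun e he => (hx e he).2
  refine ⟨?_, hprod⟩
  rw [one_div, ← exp_neg]
  linarith [mul_min_one_le_one_sub_exp_neg hsum]
end

section
/- For a nonnegative integer q define H(q) = ∫₀¹ e^{−ζ} · ( Σ_{ℓ=0}^{q} e^{−qζ}(qζ)^ℓ/ℓ! ) dζ. Then for every nonnegative integer q, H(q) ≥ (19 − 67·e^{−3})/27, and the minimum over nonnegative integers is attained at q = 2. -/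
/-- `H q = ∫₀¹ e^{-ζ} Pr[Pois(qζ) ≤ q] dζ`. -/
noncomputable def H (q : ℕ) : ℝ :=
  ∫ ζ in (0:ℝ)..1, Real.exp (-ζ) *
    ∑ ℓ ∈ Finset.range (q + 1),
      Real.exp (-((q : ℝ) * ζ)) * ((q : ℝ) * ζ) ^ ℓ / (Nat.factorial ℓ : ℝ)

/-!
Let `F_q(x) = e^{-x} ∑_{j ≤ q} x^j / j!` be the Poisson CDF and `p_q(x) = e^{-x} x^q / q!`, so
that `F_q' = -p_q`. With `r = (q/(q+1))^{q+1}` the integrand `e^{-ζ} F_q(qζ)` has the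
antiderivative `r F_q((q+1)ζ) - e^{-ζ} F_q(qζ)`, whence
`H q = 1 - r (1 - F_q(q+1)) - e^{-1} F_q(q)`.
Since `r ≤ e^{-1}` and, by the mean value theorem and `p_q(x) ≤ p_q(q)`,
`F_q(q) - F_q(q+1) ≤ p_q(q)`, we get `H q ≥ 1 - e^{-1} (1 + p_q(q))`. Stirling's bound
`p_q(q) ≤ 1/√(2πq)` makes this exceed `H 2 = (19 - 67e^{-3})/27` for `q ≥ 9`; the cases
`q ≤ 8` are numerical evaluations of the closed form.
-/

open Real Finset Nat

noncomputable def poissonPmf (n : ℕ) (x : ℝ) : ℝ := exp (-x) * x ^ n / n !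

noncomputable def poissonCdf (q : ℕ) (x : ℝ) : ℝ := ∑ n ∈ range (q + 1), poissonPmf n x

lemma hasDerivAt_poissonPmf_zero (x : ℝ) : HasDerivAt (poissonPmf 0) (-poissonPmf 0 x) x := by
  have h : poissonPmf 0 = fun y => exp (-y) := by ext; simp [poissonPmf]
  simpa [h] using (hasDerivAt_neg x).exp

lemma hasDerivAt_poissonPmf_succ (n : ℕ) (x : ℝ) :
    HasDerivAt (poissonPmf (n + 1)) (poissonPmf n x - poissonPmf (n + 1) x) x := by
  have h := (((hasDerivAt_neg x).exp).mul (hasDerivAt_pow (n + 1) x)).div_const ((n + 1) ! : ℝ)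
  refine h.congr_deriv ?_
  rw [poissonPmf, poissonPmf, factorial_succ, cast_mul, add_tsub_cancel_right]
  field_simp
  push_cast
  ring

lemma hasDerivAt_poissonCdf (q : ℕ) (x : ℝ) :
    HasDerivAt (poissonCdf q) (-poissonPmf q x) x := by
  induction q with
  | zero =>
    have h : poissonCdf 0 = poissonPmf 0 := by ext; simp [poissonCdf]
    simpa [h] using hasDerivAt_poissonPmf_zero x
  | succ q ih =>
    have hsucc : poissonCdf (q + 1) = poissonCdf q + poissonPmf (q + 1) := by
      ext y; exact sum_range_succ (fun n => poissonPmf n y) (q + 1)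
    rw [hsucc]
    exact (ih.add (hasDerivAt_poissonPmf_succ q x)).congr_deriv (by ring)

lemma poissonCdf_zero (q : ℕ) : poissonCdf q 0 = 1 := by
  rw [poissonCdf, sum_eq_single 0] <;> simp +contextual [poissonPmf]

lemma poissonCdf_le_one (q : ℕ) {x : ℝ} (hx : 0 ≤ x) : poissonCdf q x ≤ 1 := by
  have h : exp (-x) * ∑ n ∈ range (q + 1), x ^ n / n ! ≤ exp (-x) * exp x :=
    mul_le_mul_of_nonneg_left (sum_le_exp_of_nonneg hx _) (exp_pos _).le
  rw [← exp_add, neg_add_cancel, exp_zero, mul_sum] at h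
  simpa only [poissonCdf, poissonPmf, mul_div_assoc] using h

lemma continuous_poissonCdf (q : ℕ) : Continuous (poissonCdf q) :=
  continuous_iff_continuousAt.2 fun x => (hasDerivAt_poissonCdf q x).continuousAt

lemma poissonPmf_mul_add_one (q : ℕ) {a : ℝ} (ha : a + 1 ≠ 0) (x : ℝ) :
    (a / (a + 1)) ^ (q + 1) * (a + 1) * poissonPmf q ((a + 1) * x)
      = a * exp (-x) * poissonPmf q (a * x) := by
  have hexp : exp (-((a + 1) * x)) = exp (-x) * exp (-(a * x)) := by
    rw [← exp_add]; ring_nf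
  rw [poissonPmf, poissonPmf, hexp, div_pow, mul_pow, mul_pow]
  field_simp
  ring

theorem integral_exp_neg_mul_poissonCdf (q : ℕ) {a : ℝ} (ha : a + 1 ≠ 0) :
    ∫ ζ in (0 : ℝ)..1, exp (-ζ) * poissonCdf q (a * ζ)
      = 1 - (a / (a + 1)) ^ (q + 1) * (1 - poissonCdf q (a + 1))
          - exp (-1) * poissonCdf q a := by
  set r := (a / (a + 1)) ^ (q + 1)
  have hderiv : ∀ x ∈ Set.uIcc (0 : ℝ) 1, HasDerivAt
      (fun x => r * poissonCdf q ((a + 1) * x) - exp (-x) * poissonCdf q (a * x))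
      (exp (-x) * poissonCdf q (a * x)) x := by
    intro x _
    have hc : ∀ c : ℝ, HasDerivAt (fun x => poissonCdf q (c * x)) (-poissonPmf q (c * x) * c) x :=
      fun c => (hasDerivAt_poissonCdf q (c * x)).comp x (hasDerivAt_const_mul c)
    refine (((hc (a + 1)).const_mul r).sub ((hasDerivAt_neg x).exp.mul (hc a))).congr_deriv ?_
    linear_combination -poissonPmf_mul_add_one q ha x
  have hcont : Continuous fun ζ => exp (-ζ) * poissonCdf q (a * ζ) := by
    have := continuous_poissonCdf q
    fun_prop
  rw [intervalIntegral.integral_eq_sub_of_hasDerivAt hderiv (hcont.intervalIntegrable 0 1)]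
  simp only [mul_one, mul_zero, neg_zero, exp_zero, poissonCdf_zero]
  ring

-- The integrand of `H q` is `exp (-ζ) * poissonCdf q (q * ζ)` by definition.
lemma H_eq (q : ℕ) :
    H q = 1 - ((q : ℝ) / (q + 1)) ^ (q + 1) * (1 - poissonCdf q (q + 1))
      - exp (-1) * poissonCdf q q :=
  integral_exp_neg_mul_poissonCdf q (by positivity)

lemma poissonPmf_le_poissonPmf_self (n : ℕ) {x : ℝ} (hx : 0 ≤ x) :
    poissonPmf n x ≤ poissonPmf n n := by
  rcases Nat.eq_zero_or_pos n with rfl | hn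
  · simpa [poissonPmf] using hx
  have hn' : (0 : ℝ) < n := by exact_mod_cast hn
  have hlin : x ≤ n * exp (x / n - 1) := by
    have := add_one_le_exp (x / n - 1)
    rw [sub_add_cancel, div_le_iff₀ hn'] at this
    linarith
  have hpow : x ^ n ≤ (n : ℝ) ^ n * exp (x - n) := by
    calc x ^ n ≤ (n * exp (x / n - 1)) ^ n := pow_le_pow_left₀ hx hlin n
      _ = (n : ℝ) ^ n * exp (x - n) := by
        rw [mul_pow, ← exp_nat_mul]; congr 2; field_simp
  refine div_le_div_of_nonneg_right ?_ (by positivity)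
  calc exp (-x) * x ^ n ≤ exp (-x) * ((n : ℝ) ^ n * exp (x - n)) := by gcongr
    _ = exp (-n) * (n : ℝ) ^ n := by rw [mul_left_comm, ← exp_add]; ring_nf

lemma poissonCdf_sub_le (q : ℕ) {x y : ℝ} (hx : 0 ≤ x) (hxy : x ≤ y) :
    poissonCdf q x - poissonCdf q y ≤ poissonPmf q q * (y - x) := by
  have h := (convex_Ici (0 : ℝ)).mul_sub_le_image_sub_of_le_deriv
    (continuous_poissonCdf q).continuousOn
    (fun z _ => (hasDerivAt_poissonCdf q z).differentiableAt.differentiableWithinAt)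
    (C := -poissonPmf q q) (fun z hz => by
      rw [interior_Ici] at hz
      rw [(hasDerivAt_poissonCdf q z).deriv, neg_le_neg_iff]
      exact poissonPmf_le_poissonPmf_self q hz.le)
    x hx y (hx.trans hxy) hxy
  linarith

lemma div_add_one_pow_le_exp_neg_one (q : ℕ) : ((q : ℝ) / (q + 1)) ^ (q + 1) ≤ exp (-1) := by
  have h := one_sub_div_pow_le_exp_neg (n := q + 1) (t := 1) (by simp)
  rwa [show 1 - 1 / ((q + 1 : ℕ) : ℝ) = q / (q + 1) by push_cast; field_simp; ring] at h

lemma one_sub_exp_neg_one_mul_le_H (q : ℕ) : 1 - exp (-1) * (1 + poissonPmf q q) ≤ H q := by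
  have hr := div_add_one_pow_le_exp_neg_one q
  have htail : 0 ≤ 1 - poissonCdf q (q + 1) := sub_nonneg.2 (poissonCdf_le_one q (by positivity))
  have hstep := poissonCdf_sub_le q (Nat.cast_nonneg q) (le_add_of_nonneg_right zero_le_one)
  rw [add_sub_cancel_left, mul_one] at hstep
  rw [H_eq]
  nlinarith [mul_le_mul_of_nonneg_right hr htail, exp_pos (-1)]

lemma poissonPmf_self_mul_sqrt_le_one (n : ℕ) : poissonPmf n n * √(2 * π * n) ≤ 1 := by
  have h := Stirling.le_factorial_stirling n
  rw [div_pow, ← exp_nat_mul, mul_one] at h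
  rw [poissonPmf, exp_neg, mul_comm, ← mul_div_assoc, div_le_one (by positivity)]
  calc √(2 * π * n) * ((exp n)⁻¹ * (n : ℝ) ^ n) = √(2 * π * n) * ((n : ℝ) ^ n / exp n) := by
        ring
    _ ≤ n ! := h

lemma poissonPmf_self_le_of_nine_le {n : ℕ} (hn : 9 ≤ n) : poissonPmf n n ≤ 2 / 15 := by
  have hn' : (9 : ℝ) ≤ n := by exact_mod_cast hn
  have hsqrt : 15 / 2 ≤ √(2 * π * n) := by
    rw [le_sqrt (by norm_num) (by positivity)]
    nlinarith [pi_gt_d2]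
  have hpmf : 0 ≤ poissonPmf n n := by unfold poissonPmf; positivity
  nlinarith [poissonPmf_self_mul_sqrt_le_one n]

lemma exp_neg_nat (m : ℕ) : exp (-(m : ℝ)) = exp (-1) ^ m := by
  rw [← exp_nat_mul]; ring_nf

lemma exp_neg_three : exp (-3) = exp (-1) ^ 3 := by
  simpa using exp_neg_nat 3

lemma poissonCdf_natCast (q m : ℕ) :
    poissonCdf q m = exp (-1) ^ m * ∑ n ∈ range (q + 1), (m : ℝ) ^ n / n ! := by
  simp only [poissonCdf, poissonPmf, mul_sum, exp_neg_nat, mul_div_assoc]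

lemma exp_neg_one_pow_bounds (m : ℕ) :
    (0.36787944116 : ℝ) ^ m ≤ exp (-1) ^ m ∧ exp (-1) ^ m ≤ (0.3678794412 : ℝ) ^ m :=
  ⟨pow_le_pow_left₀ (by norm_num) exp_neg_one_gt_d9.le m,
    pow_le_pow_left₀ (exp_pos _).le exp_neg_one_lt_d9.le m⟩

lemma H_two : H 2 = (19 - 67 * exp (-3)) / 27 := by
  rw [H_eq, show ((2 : ℕ) : ℝ) + 1 = ((3 : ℕ) : ℝ) by norm_num, poissonCdf_natCast,
    poissonCdf_natCast, exp_neg_three]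
  norm_num [sum_range_succ, factorial]
  ring

-- The closed form is affine in `e^{-3}` and `e^{-(q+1)}`, with coefficients of fixed sign, so a
-- lower bound on the first and an upper bound on the second suffice.
lemma le_H_of_le_eight {q : ℕ} (hq : q ≤ 8) : (19 - 67 * exp (-3)) / 27 ≤ H q := by
  obtain ⟨h3, -⟩ := exp_neg_one_pow_bounds 3
  obtain ⟨-, hq1⟩ := exp_neg_one_pow_bounds (q + 1)
  rw [H_eq, show (q : ℝ) + 1 = ((q + 1 : ℕ) : ℝ) by push_cast; ring, poissonCdf_natCast,
    poissonCdf_natCast, exp_neg_three, ← mul_assoc, ← pow_succ' (exp (-1)) q]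
  interval_cases q <;> norm_num [sum_range_succ, factorial] at hq1 ⊢ <;> linarith

theorem stmt_5 :
    (∀ q : ℕ, (19 - 67 * Real.exp (-3)) / 27 ≤ H q) ∧ (∀ q : ℕ, H 2 ≤ H q) := by
  have hbound : ∀ q : ℕ, (19 - 67 * exp (-3)) / 27 ≤ H q := by
    intro q
    rcases le_or_gt q 8 with hq | hq
    · exact le_H_of_le_eight hq
    calc (19 - 67 * exp (-3)) / 27 ≤ 1 - exp (-1) * (1 + 2 / 15) := by
          rw [exp_neg_three]
          nlinarith [(exp_neg_one_pow_bounds 3).1, exp_neg_one_lt_d9]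
      _ ≤ 1 - exp (-1) * (1 + poissonPmf q q) := by
        gcongr; exact poissonPmf_self_le_of_nine_le hq
      _ ≤ H q := one_sub_exp_neg_one_mul_le_H q
  exact ⟨hbound, fun q => H_two ▸ hbound q⟩
end

section
/- Define H_L(q) = ∫₀¹ e^{−ζ} · (1 − exp(−q(1−ζ)²/2)) dζ for real q > 0. Then H_L is an increasing function of q on (0, ∞), and H_L(100) ≥ 0.582. -/
/-!
Since `(1 - ζ)² ≥ 0`, the integrand of `H_L` is pointwise increasing in `q`. For the value at
`q = 100`, complete the square: `ζ + q(1-ζ)²/2 = 1 - 1/(2q) + (q/2)(ζ - (1 - 1/q))²`, so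
`H_L(q) = 1 - e⁻¹ - e^{-(1 - 1/(2q))} ∫₀¹ e^{-(q/2)(ζ - (1 - 1/q))²} dζ`. The Gaussian integral
is at most the half-line Gaussian mass `√(2π/q)/2` left of the peak plus the length `1/q` of the
interval right of it, which leaves `H_L(100) ≥ 0.58208…`.
-/

open Real MeasureTheory intervalIntegral Set

/-- `H_L q = ∫₀¹ e^{-ζ} (1 - e^{-q(1-ζ)²/2}) dζ`. -/
noncomputable def HL (q : ℝ) : ℝ :=
  ∫ ζ in (0:ℝ)..1, Real.exp (-ζ) * (1 - Real.exp (-(q * (1 - ζ) ^ 2 / 2)))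

lemma HL_monotone : Monotone HL := by
  intro a b hab
  refine integral_mono_on zero_le_one ((by fun_prop : Continuous _).intervalIntegrable _ _)
    ((by fun_prop : Continuous _).intervalIntegrable _ _) fun ζ _ => ?_
  gcongr

lemma HL_eq_sub_gaussian {q : ℝ} (hq : q ≠ 0) :
    HL q = (1 - exp (-1)) -
      exp (-(1 - 1 / (2 * q))) * ∫ ζ in (0:ℝ)..1, exp (-(q / 2) * (ζ - (1 - 1 / q)) ^ 2) := by
  have hsquare : ∀ ζ : ℝ, exp (-ζ) * (1 - exp (-(q * (1 - ζ) ^ 2 / 2))) =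
      exp (-ζ) - exp (-(1 - 1 / (2 * q))) * exp (-(q / 2) * (ζ - (1 - 1 / q)) ^ 2) := by
    intro ζ
    rw [mul_sub, mul_one, ← exp_add, ← exp_add]
    congr 2
    field_simp
    ring
  have hexp : ∫ ζ in (0:ℝ)..1, exp (-ζ) = 1 - exp (-1) := by
    simp [integral_comp_neg (fun ζ => exp ζ)]
  rw [HL, integral_congr fun ζ _ => hsquare ζ,
    integral_sub ((by fun_prop : Continuous _).intervalIntegrable _ _)
      ((by fun_prop : Continuous _).intervalIntegrable _ _),
    intervalIntegral.integral_const_mul, hexp]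

lemma integral_exp_neg_mul_sq_sub_le {b a c d : ℝ} (hb : 0 < b) (hac : a ≤ c) (hcd : c ≤ d) :
    ∫ x in a..d, exp (-b * (x - c) ^ 2) ≤ √(π / b) / 2 + (d - c) := by
  have hcont : Continuous fun x : ℝ => exp (-b * (x - c) ^ 2) := by fun_prop
  have hleft : ∫ x in a..c, exp (-b * (x - c) ^ 2) ≤ √(π / b) / 2 := by
    have hreflect :
        ∫ x in a..c, exp (-b * (x - c) ^ 2) = ∫ x in (0:ℝ)..c - a, exp (-b * x ^ 2) := by
      have := integral_comp_sub_left (fun x => exp (-b * x ^ 2)) c (a := a) (b := c)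
      rw [sub_self] at this
      rw [← this]
      congr! 3
      ring
    rw [hreflect, integral_of_le (by linarith), ← integral_gaussian_Ioi b]
    exact setIntegral_mono_set (integrable_exp_neg_mul_sq hb).integrableOn
      (.of_forall fun x => (exp_pos _).le) (.of_forall Ioc_subset_Ioi_self)
  have hright : ∫ x in c..d, exp (-b * (x - c) ^ 2) ≤ d - c := by
    calc ∫ x in c..d, exp (-b * (x - c) ^ 2) ≤ ∫ _ in c..d, (1:ℝ) :=
          integral_mono_on hcd (hcont.intervalIntegrable _ _) intervalIntegrable_const
            fun x _ => exp_le_one_iff.mpr (by nlinarith [sq_nonneg (x - c)])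
      _ = d - c := by simp
  rw [← integral_add_adjacent_intervals (hcont.intervalIntegrable a c)
    (hcont.intervalIntegrable c d)]
  linarith

lemma le_HL_of_one_le {q : ℝ} (hq : 1 ≤ q) :
    (1 - exp (-1)) - exp (-(1 - 1 / (2 * q))) * (√(π / (q / 2)) / 2 + 1 / q) ≤ HL q := by
  rw [HL_eq_sub_gaussian (by positivity)]
  gcongr
  simpa using integral_exp_neg_mul_sq_sub_le (a := 0) (c := 1 - 1 / q) (d := 1) (by positivity)
    (sub_nonneg.mpr ((div_le_one (by positivity)).mpr hq)) (sub_le_self 1 (by positivity))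

theorem stmt_7 : MonotoneOn HL (Set.Ioi (0:ℝ)) ∧ HL 100 ≥ 0.582 := by
  refine ⟨HL_monotone.monotoneOn _, le_trans ?_ (le_HL_of_one_le (by norm_num))⟩
  have hshift : exp (-(1 - 1 / (2 * 100))) ≤ 0.36973 := by
    rw [show -(1 - 1 / (2 * 100) : ℝ) = -1 + 1 / 200 by norm_num, exp_add]
    have := exp_bound_div_one_sub_of_interval (x := 1 / 200) (by norm_num) (by norm_num)
    nlinarith [exp_neg_one_lt_d9, exp_pos (-1), exp_pos (1 / 200)]
  have hsqrt : √(π / (100 / 2)) ≤ 0.2506631 :=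
    sqrt_le_iff.mpr ⟨by norm_num, by nlinarith [pi_lt_d6]⟩
  have hgauss : √(π / (100 / 2)) / 2 + 1 / 100 ≤ 0.13533155 := by linarith
  nlinarith [exp_neg_one_lt_d9, mul_le_mul hshift hgauss (by positivity) (by norm_num)]
end

section
/- For every integer b ≥ 3, Σ_{ℓ=2}^{b−1} (e^{−b} b^ℓ/ℓ!) · exp(−1 + (1 − 1/b)^ℓ) ≤ 1/4 + e^{−2+1/b}/4 + e^{−2+1/b}/√(2π(b−2)). -/
/-!
Since `e^{-t} ≤ 1 - t + t²/2` for `t ≥ 0`, taking `t = 1 - c^ℓ` with `c = 1 - 1/b` gives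
`e^{-1 + c^ℓ} ≤ (1 + c^{2ℓ})/2`. The weight `e^{-b} b^ℓ/ℓ! · c^{2ℓ}` is `e^{-2+1/b}` times the
Poisson(μ) weight at `ℓ`, where `μ = b c² = b - 2 + 1/b`. So the sum is at most half the
Poisson(b) mass of `[0, b)` plus `e^{-2+1/b}/2` times the Poisson(μ) mass of `[0, b)`.
Both masses below the (integer part of the) mean are at most `1/2`, and the two remaining
Poisson(μ) weights at `b - 2` and `b - 1` are each at most `1/√(2π(b-2))` by Stirling's formula.
-/

open Real Finset Nat

lemma Real.exp_neg_le_one_sub_add_sq_div_two {t : ℝ} (ht : 0 ≤ t) :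
    exp (-t) ≤ 1 - t + t ^ 2 / 2 := by
  -- `(1 - t + t²/2) (1 + t + t²/2) = 1 + t⁴/4`
  have hprod : 1 ≤ (1 - t + t ^ 2 / 2) * exp t := by
    nlinarith [quadratic_le_exp_of_nonneg ht, sq_nonneg (t - 1), pow_nonneg ht 4]
  calc exp (-t) ≤ exp (-t) * ((1 - t + t ^ 2 / 2) * exp t) :=
        le_mul_of_one_le_right (exp_pos _).le hprod
    _ = 1 - t + t ^ 2 / 2 := by rw [mul_comm, mul_assoc, ← exp_add]; simp

lemma Real.exp_sub_one_le_one_add_sq_div_two {x : ℝ} (hx : x ≤ 1) :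
    exp (x - 1) ≤ (1 + x ^ 2) / 2 := by
  have h := exp_neg_le_one_sub_add_sq_div_two (sub_nonneg.2 hx)
  rw [neg_sub] at h
  linarith

/-- `(m + 2d + 1)! / m!` is the product of `2d + 1` consecutive integers centred at `m + d + 1`. -/
lemma Nat.factorial_le_pow_mul_factorial (m d : ℕ) :
    (m + 2 * d + 1)! ≤ (m + d + 1) ^ (2 * d + 1) * m ! := by
  induction d generalizing m with
  | zero => simp [factorial_succ]
  | succ d ih =>
    calc (m + 2 * (d + 1) + 1)! = (m + 2 * d + 3) * (m + 1 + 2 * d + 1)! := by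
          rw [show m + 2 * (d + 1) + 1 = m + 1 + 2 * d + 1 + 1 by ring, factorial_succ]; ring_nf
      _ ≤ (m + 2 * d + 3) * ((m + d + 2) ^ (2 * d + 1) * (m + 1)!) := by
          rw [show m + d + 2 = m + 1 + d + 1 by ring]; exact Nat.mul_le_mul_left _ (ih (m + 1))
      _ = (m + 2 * d + 3) * (m + 1) * (m + d + 2) ^ (2 * d + 1) * m ! := by
          rw [factorial_succ]; ring
      _ ≤ (m + d + 2) ^ 2 * (m + d + 2) ^ (2 * d + 1) * m ! := by
          gcongr; nlinarith
      _ = (m + (d + 1) + 1) ^ (2 * (d + 1) + 1) * m ! := by ring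

/-- `i + 2d + 1` is the mirror image of `i` across `i + d + 1/2`. -/
lemma pow_div_factorial_le_pow_div_factorial_reflect {μ : ℝ} {i d : ℕ}
    (hμ : (i + d + 1 : ℝ) ≤ μ) :
    μ ^ i / i ! ≤ μ ^ (i + 2 * d + 1) / (i + 2 * d + 1)! := by
  have hfac : ((i + 2 * d + 1)! : ℝ) ≤ μ ^ (2 * d + 1) * i ! := by
    calc ((i + 2 * d + 1)! : ℝ) ≤ ((i + d + 1 : ℕ) : ℝ) ^ (2 * d + 1) * i ! := by
          exact_mod_cast factorial_le_pow_mul_factorial i d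
      _ ≤ μ ^ (2 * d + 1) * i ! := by gcongr; push_cast; exact hμ
  have hμ0 : 0 ≤ μ := le_trans (by positivity) hμ
  rw [div_le_div_iff₀ (by positivity) (by positivity)]
  calc μ ^ i * (i + 2 * d + 1)! ≤ μ ^ i * (μ ^ (2 * d + 1) * i !) := by gcongr
    _ = μ ^ (i + 2 * d + 1) * i ! := by ring

lemma sum_range_exp_neg_mul_pow_div_factorial_le_half {μ : ℝ} {m : ℕ} (hm : (m : ℝ) ≤ μ) :
    ∑ ℓ ∈ range m, exp (-μ) * μ ^ ℓ / ℓ ! ≤ 1 / 2 := by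
  have hμ : 0 ≤ μ := (cast_nonneg m).trans hm
  have hlow_le_high : ∑ ℓ ∈ range m, μ ^ ℓ / ℓ ! ≤ ∑ i ∈ range m, μ ^ (m + i) / (m + i)! := by
    rw [← sum_range_reflect]
    refine sum_le_sum fun i hi => ?_
    have hi : i < m := mem_range.1 hi
    have h := pow_div_factorial_le_pow_div_factorial_reflect (μ := μ) (i := m - 1 - i) (d := i)
      (by exact_mod_cast (show m - 1 - i + i + 1 = m by omega) ▸ hm)
    rwa [show m - 1 - i + 2 * i + 1 = m + i by omega] at h
  have htotal : ∑ ℓ ∈ range (m + m), μ ^ ℓ / ℓ ! ≤ exp μ := sum_le_exp_of_nonneg hμ _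
  rw [sum_range_add] at htotal
  simp_rw [mul_div_assoc, ← mul_sum]
  calc exp (-μ) * ∑ ℓ ∈ range m, μ ^ ℓ / ℓ ! ≤ exp (-μ) * (exp μ / 2) := by gcongr; linarith
    _ = 1 / 2 := by rw [← mul_div_assoc, ← exp_add]; simp

lemma exp_neg_mul_pow_le {μ : ℝ} (hμ : 0 ≤ μ) {k : ℕ} (hk : k ≠ 0) :
    exp (-μ) * μ ^ k ≤ (k / exp 1) ^ k := by
  have hk' : (0 : ℝ) < k := by positivity
  have hratio : μ / k ≤ exp (μ / k - 1) := by linarith [add_one_le_exp (μ / k - 1)]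
  have hexponent : -μ + k * (μ / k - 1) = -k := by field_simp; ring
  calc exp (-μ) * μ ^ k = exp (-μ) * (k ^ k * (μ / k) ^ k) := by
        rw [div_pow, mul_div_cancel₀ _ (by positivity)]
    _ ≤ exp (-μ) * (k ^ k * exp (μ / k - 1) ^ k) := by gcongr
    _ = (k / exp 1) ^ k := by
        rw [← exp_nat_mul, mul_left_comm, ← exp_add, hexponent, div_pow, ← exp_nat_mul, mul_one,
          exp_neg, div_eq_mul_inv]

lemma exp_neg_mul_pow_div_factorial_le {μ : ℝ} (hμ : 0 ≤ μ) {k : ℕ} (hk : k ≠ 0) :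
    exp (-μ) * μ ^ k / k ! ≤ 1 / √(2 * π * k) := by
  have hsqrt : 0 < √(2 * π * k) := by positivity
  rw [div_le_div_iff₀ (by positivity) hsqrt, one_mul, mul_comm]
  calc √(2 * π * k) * (exp (-μ) * μ ^ k) ≤ √(2 * π * k) * (k / exp 1) ^ k := by
        gcongr; exact exp_neg_mul_pow_le hμ hk
    _ ≤ k ! := Stirling.le_factorial_stirling k

lemma exp_neg_mul_pow_div_factorial_mul_pow (μ s : ℝ) (ℓ : ℕ) :
    exp (-μ) * μ ^ ℓ / ℓ ! * s ^ ℓ =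
      exp (-(μ - μ * s)) * (exp (-(μ * s)) * (μ * s) ^ ℓ / ℓ !) := by
  have hexp : exp (-μ) = exp (-(μ - μ * s)) * exp (-(μ * s)) := by rw [← exp_add]; ring_nf
  rw [hexp, mul_pow]
  ring

lemma sum_range_exp_neg_mul_pow_div_factorial_le_of_sub_two_le {μ : ℝ} {m : ℕ} (hm : 3 ≤ m)
    (hmμ : (m : ℝ) - 2 ≤ μ) :
    ∑ ℓ ∈ range m, exp (-μ) * μ ^ ℓ / ℓ ! ≤ 1 / 2 + 2 / √(2 * π * (m - 2)) := by
  obtain ⟨k, rfl⟩ : ∃ k, m = k + 2 := ⟨m - 2, by omega⟩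
  have hk : k ≠ 0 := by omega
  push_cast at hmμ ⊢
  rw [add_sub_cancel_right] at hmμ ⊢
  have hμ : 0 ≤ μ := (cast_nonneg k).trans hmμ
  have hnext : exp (-μ) * μ ^ (k + 1) / (k + 1)! ≤ 1 / √(2 * π * k) :=
    calc exp (-μ) * μ ^ (k + 1) / (k + 1)! ≤ 1 / √(2 * π * (k + 1 : ℕ)) :=
          exp_neg_mul_pow_div_factorial_le hμ k.succ_ne_zero
      _ ≤ 1 / √(2 * π * k) := by gcongr; linarith
  calc ∑ ℓ ∈ range (k + 2), exp (-μ) * μ ^ ℓ / ℓ !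
      = ∑ ℓ ∈ range k, exp (-μ) * μ ^ ℓ / ℓ ! + exp (-μ) * μ ^ k / k ! +
          exp (-μ) * μ ^ (k + 1) / (k + 1)! := by rw [sum_range_succ, sum_range_succ]
    _ ≤ 1 / 2 + 1 / √(2 * π * k) + 1 / √(2 * π * k) :=
        add_le_add (add_le_add (sum_range_exp_neg_mul_pow_div_factorial_le_half hmμ)
          (exp_neg_mul_pow_div_factorial_le hμ hk)) hnext
    _ = 1 / 2 + 2 / √(2 * π * k) := by ring

lemma exp_neg_one_add_pow_le {c : ℝ} (hc0 : 0 ≤ c) (hc1 : c ≤ 1) (ℓ : ℕ) :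
    exp (-1 + c ^ ℓ) ≤ (1 + (c ^ 2) ^ ℓ) / 2 := by
  rw [neg_add_eq_sub, ← pow_mul, mul_comm 2 ℓ, pow_mul]
  exact exp_sub_one_le_one_add_sq_div_two (pow_le_one₀ hc0 hc1)

theorem stmt_12 (b : ℕ) (hb : 3 ≤ b) :
    ∑ ℓ ∈ Finset.Ico 2 b,
        Real.exp (-(b : ℝ)) * (b : ℝ) ^ ℓ / (Nat.factorial ℓ : ℝ) *
          Real.exp (-1 + (1 - 1 / (b : ℝ)) ^ ℓ)
      ≤ 1 / 4 + Real.exp (-2 + 1 / (b : ℝ)) / 4 +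
          Real.exp (-2 + 1 / (b : ℝ)) / Real.sqrt (2 * Real.pi * ((b : ℝ) - 2)) := by
  have hb0 : (0 : ℝ) < b := by positivity
  set c : ℝ := 1 - 1 / (b : ℝ) with hc
  set μ : ℝ := b * c ^ 2 with hμ
  have hμb : μ = b - 2 + 1 / b := by rw [hμ, hc]; field_simp; ring
  have hc0 : 0 ≤ c := sub_nonneg.2 <| (div_le_one hb0).2 <| by exact_mod_cast (by omega : 1 ≤ b)
  have hterm (ℓ : ℕ) : exp (-b) * b ^ ℓ / ℓ ! * exp (-1 + c ^ ℓ) ≤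
      exp (-b) * b ^ ℓ / ℓ ! / 2 + exp (-2 + 1 / b) / 2 * (exp (-μ) * μ ^ ℓ / ℓ !) :=
    calc _ ≤ exp (-b) * b ^ ℓ / ℓ ! * ((1 + (c ^ 2) ^ ℓ) / 2) := by
          gcongr; exact exp_neg_one_add_pow_le hc0 (sub_le_self _ (one_div_pos.2 hb0).le) ℓ
      _ = _ := by
          rw [mul_div_assoc', mul_one_add, exp_neg_mul_pow_div_factorial_mul_pow, ← hμ,
            show -(b - μ) = -2 + 1 / b by rw [hμb]; ring]
          ring
  have hIco : Ico 2 b ⊆ range b := by rw [range_eq_Ico]; exact Ico_subset_Ico_left (zero_le 2)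
  calc ∑ ℓ ∈ Ico 2 b, exp (-b) * b ^ ℓ / ℓ ! * exp (-1 + c ^ ℓ)
      ≤ ∑ ℓ ∈ range b, exp (-b) * b ^ ℓ / ℓ ! * exp (-1 + c ^ ℓ) :=
        sum_le_sum_of_subset_of_nonneg hIco fun _ _ _ => by positivity
    _ ≤ (∑ ℓ ∈ range b, exp (-b) * b ^ ℓ / ℓ !) / 2 +
          exp (-2 + 1 / b) / 2 * ∑ ℓ ∈ range b, exp (-μ) * μ ^ ℓ / ℓ ! := by
        rw [sum_div, mul_sum, ← sum_add_distrib]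
        exact sum_le_sum fun ℓ _ => hterm ℓ
    _ ≤ (1 / 2) / 2 + exp (-2 + 1 / b) / 2 * (1 / 2 + 2 / √(2 * π * (b - 2))) := by
        gcongr
        · exact sum_range_exp_neg_mul_pow_div_factorial_le_half le_rfl
        · exact sum_range_exp_neg_mul_pow_div_factorial_le_of_sub_two_le hb
            (by rw [hμb]; linarith [one_div_pos.2 hb0])
    _ = _ := by ring
end

section
/- Let J be a finite set, let g : 2^J → ℝ be a monotone submodular set function, let x : J → [0,1] with Σ_{j∈J} x_j = 1, and let ℓ ≥ 1 be an integer. Let U = {J_1, …, J_ℓ} where J_1, …, J_ℓ are i.i.d. random elements of J with Pr[J_ι = j] = x_j, and let V = σ^{(1)} ∪ ⋯ ∪ σ^{(ℓ)} where σ^{(1)}, …, σ^{(ℓ)} are i.i.d. random subsets of J, each including every j ∈ J independently with probability x_j. Then E[g(U)] ≥ E[g(V)]. -/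
/-!
Condition on everything except one of the random sets. By submodularity the marginal gains of a
set are subadditive, so for any base set `B`,
`E[g(B ∪ σ)] ≤ g B + ∑ j, x j * (g (B ∪ {j}) - g B) = E[g(B ∪ {J'})]`, where the equality uses
`Pr[j ∈ σ] = x j = Pr[J' = j]` and `∑ j, x j = 1`. Replacing the random sets `σ⁽ι⁾` by single
draws `J_ι` one at a time (induction on `ℓ` with a general base set `B`) can therefore only
increase the expectation.
-/

open Finset

section BernoulliWeight

variable {J R : Type*} [Fintype J] [DecidableEq J] [CommRing R]

def bernoulliWeight (x : J → R) (A : Finset J) : R :=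
  (∏ j ∈ A, x j) * ∏ j ∈ Aᶜ, (1 - x j)

theorem sum_bernoulliWeight (x : J → R) : ∑ A, bernoulliWeight x A = 1 := by
  simpa only [bernoulliWeight, add_sub_cancel, prod_const_one] using
    (Fintype.prod_add x (fun j => 1 - x j)).symm

theorem sum_bernoulliWeight_filter_mem (x : J → R) (j : J) :
    ∑ A with j ∈ A, bernoulliWeight x A = x j := by
  -- Giving the event `j ∉ A` weight zero kills exactly the sets without `j`.
  set y := Function.update (fun i => 1 - x i) j 0
  have hprod : ∏ i, (x i + y i) = x j := by
    rw [Fintype.prod_eq_single j fun i hi => by simp [y, hi]]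
    simp [y]
  have hterm : ∀ A : Finset J, (∏ i ∈ A, x i) * ∏ i ∈ Aᶜ, y i =
      if j ∈ A then bernoulliWeight x A else 0 := by
    intro A
    split_ifs with hj
    · refine congrArg _ (prod_congr rfl fun i hi => ?_)
      exact Function.update_of_ne (by rintro rfl; simp_all) _ _
    · exact mul_eq_zero_of_right _ (prod_eq_zero (mem_compl.2 hj) (by simp [y]))
  rw [sum_filter, ← hprod, Fintype.prod_add]
  exact (Fintype.sum_congr _ _ hterm).symm

theorem bernoulliWeight_nonneg {x : J → ℝ} (hx : ∀ j, 0 ≤ x j ∧ x j ≤ 1) (A : Finset J) :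
    0 ≤ bernoulliWeight x A :=
  mul_nonneg (prod_nonneg fun j _ => (hx j).1) (prod_nonneg fun j _ => sub_nonneg.2 (hx j).2)

end BernoulliWeight

section Submodular

variable {J : Type*} [DecidableEq J] (g : Finset J → ℝ)

theorem union_le_add_sum_marginal
    (hsub : ∀ S T : Finset J, g (S ∪ T) + g (S ∩ T) ≤ g S + g T) (B A : Finset J) :
    g (B ∪ A) ≤ g B + ∑ j ∈ A, (g (B ∪ {j}) - g B) := by
  induction A using Finset.induction_on with
  | empty => simp
  | insert a A ha ih =>
    have h := hsub (B ∪ A) (B ∪ {a})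
    rw [← union_union_distrib_left, ← union_inter_distrib_left,
      inter_singleton_of_notMem ha, union_empty, union_comm A] at h
    rw [sum_insert ha, insert_eq]
    linarith

theorem sum_bernoulliWeight_mul_union_le [Fintype J]
    (hsub : ∀ S T : Finset J, g (S ∪ T) + g (S ∩ T) ≤ g S + g T)
    {x : J → ℝ} (hx : ∀ j, 0 ≤ x j ∧ x j ≤ 1) (hsum : ∑ j, x j = 1) (B : Finset J) :
    ∑ A, bernoulliWeight x A * g (B ∪ A) ≤ ∑ j, x j * g (B ∪ {j}) := by
  calc ∑ A, bernoulliWeight x A * g (B ∪ A)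
      ≤ ∑ A, bernoulliWeight x A * (g B + ∑ j ∈ A, (g (B ∪ {j}) - g B)) :=
        sum_le_sum fun A _ => mul_le_mul_of_nonneg_left
          (union_le_add_sum_marginal g hsub B A) (bernoulliWeight_nonneg hx A)
    _ = g B + ∑ j, x j * (g (B ∪ {j}) - g B) := by
        simp only [mul_add, sum_add_distrib, ← sum_mul, sum_bernoulliWeight, one_mul, mul_sum]
        rw [sum_comm' (t' := univ) (s' := fun j => {A | j ∈ A}) (by simp)]
        simp only [← sum_mul, sum_bernoulliWeight_filter_mem]
    _ = ∑ j, x j * g (B ∪ {j}) := by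
        simp only [mul_sub, sum_sub_distrib, ← sum_mul, hsum, one_mul]
        ring

end Submodular

theorem Fintype.sum_prod_mul_fin_succ {α R : Type*} [Fintype α] [CommSemiring R] {n : ℕ}
    (p : α → R) (F : (Fin (n + 1) → α) → R) :
    ∑ t : Fin (n + 1) → α, (∏ ι, p (t ι)) * F t =
      ∑ a, p a * ∑ t : Fin n → α, (∏ ι, p (t ι)) * F (Fin.cons a t) := by
  rw [← (Fin.consEquiv fun _ => α).sum_comp, Fintype.sum_prod_type]
  simp only [Fin.consEquiv_apply, Fin.prod_univ_succ, Fin.cons_zero, Fin.cons_succ, mul_sum,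
    mul_assoc]
  rfl

theorem Fin.image_univ_cons {α : Type*} [DecidableEq α] {n : ℕ} (a : α) (t : Fin n → α) :
    univ.image (Fin.cons a t : Fin (n + 1) → α) = insert a (univ.image t) := by
  ext i
  simp [Fin.exists_fin_succ, eq_comm]

theorem Fin.biUnion_univ_cons {α : Type*} [DecidableEq α] {n : ℕ} (A₀ : Finset α)
    (A : Fin n → Finset α) :
    univ.biUnion (Fin.cons A₀ A : Fin (n + 1) → Finset α) = A₀ ∪ univ.biUnion A := by
  ext i
  simp [Fin.exists_fin_succ]

theorem sum_bernoulli_biUnion_le_sum_image {J : Type*} [Fintype J] [DecidableEq J]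
    (g : Finset J → ℝ) (hsub : ∀ S T : Finset J, g (S ∪ T) + g (S ∩ T) ≤ g S + g T)
    {x : J → ℝ} (hx : ∀ j, 0 ≤ x j ∧ x j ≤ 1) (hsum : ∑ j, x j = 1) (ℓ : ℕ) (B : Finset J) :
    ∑ A : Fin ℓ → Finset J, (∏ ι, bernoulliWeight x (A ι)) * g (B ∪ univ.biUnion A) ≤
      ∑ t : Fin ℓ → J, (∏ ι, x (t ι)) * g (B ∪ univ.image t) := by
  induction ℓ generalizing B with
  | zero => simp
  | succ n ih =>
    have hx_prod (t : Fin n → J) : 0 ≤ ∏ ι, x (t ι) := prod_nonneg fun ι _ => (hx (t ι)).1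
    calc _ = ∑ A₀, bernoulliWeight x A₀ * ∑ A : Fin n → Finset J,
            (∏ ι, bernoulliWeight x (A ι)) * g ((B ∪ A₀) ∪ univ.biUnion A) := by
          simp only [Fintype.sum_prod_mul_fin_succ, Fin.biUnion_univ_cons, union_assoc]
      _ ≤ ∑ A₀, bernoulliWeight x A₀ * ∑ t : Fin n → J,
            (∏ ι, x (t ι)) * g ((B ∪ A₀) ∪ univ.image t) :=
          sum_le_sum fun A₀ _ =>
            mul_le_mul_of_nonneg_left (ih (B ∪ A₀)) (bernoulliWeight_nonneg hx A₀)
      _ = ∑ t : Fin n → J, (∏ ι, x (t ι)) *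
            ∑ A₀, bernoulliWeight x A₀ * g ((B ∪ univ.image t) ∪ A₀) := by
          simp only [mul_sum, union_right_comm B]
          rw [sum_comm]
          exact sum_congr rfl fun t _ => sum_congr rfl fun A₀ _ => by ring
      _ ≤ ∑ t : Fin n → J, (∏ ι, x (t ι)) * ∑ j, x j * g ((B ∪ univ.image t) ∪ {j}) :=
          sum_le_sum fun t _ => mul_le_mul_of_nonneg_left
            (sum_bernoulliWeight_mul_union_le g hsub hx hsum _) (hx_prod t)
      _ = _ := by
          simp only [Fintype.sum_prod_mul_fin_succ, Fin.image_univ_cons, mul_sum]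
          rw [sum_comm]
          refine sum_congr rfl fun j _ => sum_congr rfl fun t _ => ?_
          rw [union_comm _ {j}, union_left_comm, ← insert_eq]
          ring

theorem stmt_13_general {J : Type*} [Fintype J] [DecidableEq J]
    (g : Finset J → ℝ)
    (hsub : ∀ S T : Finset J, g (S ∪ T) + g (S ∩ T) ≤ g S + g T)
    (x : J → ℝ) (hx : ∀ j, 0 ≤ x j ∧ x j ≤ 1) (hsum : ∑ j, x j = 1)
    (ℓ : ℕ) :
    -- E[g(U)] where U = {J_1,…,J_ℓ}, J_ι i.i.d. with Pr[J_ι = j] = x_j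
    ∑ t : Fin ℓ → J, (∏ ι, x (t ι)) * g (Finset.univ.image t)
      ≥
    -- E[g(V)] where V = σ⁽¹⁾ ∪ ⋯ ∪ σ⁽ℓ⁾, σ⁽ι⁾ i.i.d. independent samples
    ∑ A : Fin ℓ → Finset J,
        (∏ ι, ((∏ j ∈ A ι, x j) * ∏ j ∈ (A ι)ᶜ, (1 - x j))) * g (Finset.univ.biUnion A) := by
  simpa only [bernoulliWeight, empty_union, ge_iff_le] using
    sum_bernoulli_biUnion_le_sum_image g hsub hx hsum ℓ ∅

theorem stmt_13 {J : Type*} [Fintype J] [DecidableEq J]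
    (g : Finset J → ℝ)
    (hmono : ∀ S T : Finset J, S ⊆ T → g S ≤ g T)
    (hsub : ∀ S T : Finset J, g (S ∪ T) + g (S ∩ T) ≤ g S + g T)
    (x : J → ℝ) (hx : ∀ j, 0 ≤ x j ∧ x j ≤ 1) (hsum : ∑ j, x j = 1)
    (ℓ : ℕ) (hℓ : 1 ≤ ℓ) :
    -- E[g(U)] where U = {J_1,…,J_ℓ}, J_ι i.i.d. with Pr[J_ι = j] = x_j
    ∑ t : Fin ℓ → J, (∏ ι, x (t ι)) * g (Finset.univ.image t)
      ≥
    -- E[g(V)] where V = σ⁽¹⁾ ∪ ⋯ ∪ σ⁽ℓ⁾, σ⁽ι⁾ i.i.d. independent samples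
    ∑ A : Fin ℓ → Finset J,
        (∏ ι, ((∏ j ∈ A ι, x j) * ∏ j ∈ (A ι)ᶜ, (1 - x j))) * g (Finset.univ.biUnion A) :=
  stmt_13_general g hsub x hx hsum ℓ
end

section
/- Let J be a finite set, let g : 2^J → ℝ be a nonnegative monotone submodular set function with g(∅) = 0, let b ≥ 1 be an integer, let x : J → [0, 1/b] with Σ_{j∈J} x_j = 1, and let ℓ ≥ 1 be an integer. Let U = {J_1, …, J_ℓ} where J_1, …, J_ℓ are i.i.d. random elements of J with Pr[J_ι = j] = x_j. Then E[g(U)] ≥ (1 − exp(−1 + (1 − 1/b)^ℓ)) · g⁺(b·x), where g⁺ is the concave closure of g. -/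
/-!
Fix a distribution `α` on `2^J` with marginals `b·x` and let `OPT = Σ_S α_S g(S)`. Submodularity
bounds `OPT - g(A)` by the `α`-average of `Σ_{j∈S} (g(A ∪ {j}) - g(A))`, which is `b` times the
expected gain of adding one more sample `j ~ x` to `A`. Hence each new sample closes at least a
`1/b` fraction of the gap to `OPT`, so after `ℓ` samples `E[g(U)] ≥ (1 - (1 - 1/b)^ℓ) · OPT`, and
`1 - (1 - 1/b)^ℓ ≥ 1 - exp(-1 + (1 - 1/b)^ℓ)` since `r ≤ exp(r - 1)` for every real `r`.
-/

/-- The concave closure `g⁺` of a set function `g` on a finite ground set: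
`g⁺(y) = sup { Σ_S α_S g(S) : α a probability distribution on 2^J with marginals y }`. -/
noncomputable def concaveClosure {J : Type*} [Fintype J] [DecidableEq J]
    (g : Finset J → ℝ) (y : J → ℝ) : ℝ :=
  sSup { v : ℝ | ∃ α : Finset J → ℝ, (∀ S, 0 ≤ α S) ∧ (∑ S : Finset J, α S = 1) ∧
    (∀ j, ∑ S ∈ Finset.univ.filter (fun S : Finset J => j ∈ S), α S = y j) ∧
    v = ∑ S : Finset J, α S * g S }

open Finset

section SetFunction

variable {J : Type*} [DecidableEq J] (g : Finset J → ℝ)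

lemma sub_le_sum_insert_sub_of_submodular
    (hsub : ∀ S T : Finset J, g (S ∪ T) + g (S ∩ T) ≤ g S + g T) (A S : Finset J) :
    g (A ∪ S) - g A ≤ ∑ j ∈ S, (g (insert j A) - g A) := by
  induction S using Finset.induction with
  | empty => simp
  | @insert j S hjS ih =>
    have hunion : A ∪ insert j S = insert j A ∪ (A ∪ S) := by
      ext; simp only [mem_insert, mem_union]; tauto
    have hinter : insert j A ∩ (A ∪ S) = A := by
      ext a; simp only [mem_inter, mem_insert, mem_union]; grind
    have hsubmod := hsub (insert j A) (A ∪ S)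
    rw [hinter] at hsubmod
    rw [sum_insert hjS, hunion]
    linarith

variable [Fintype J]

lemma sum_marginal_mul (α : Finset J → ℝ) (f : J → ℝ) :
    ∑ j, (∑ S ∈ univ.filter (fun S => j ∈ S), α S) * f j = ∑ S, α S * ∑ j ∈ S, f j := by
  simp only [sum_mul, mul_sum]
  exact sum_comm' (by simp)

lemma sum_mul_sub_le_sum_marginal_mul_gain
    (hmono : ∀ S T : Finset J, S ⊆ T → g S ≤ g T)
    (hsub : ∀ S T : Finset J, g (S ∪ T) + g (S ∩ T) ≤ g S + g T)
    {α : Finset J → ℝ} {y : J → ℝ} (hα0 : ∀ S, 0 ≤ α S) (hα1 : ∑ S, α S = 1)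
    (hαy : ∀ j, ∑ S ∈ univ.filter (fun S => j ∈ S), α S = y j) (A : Finset J) :
    ∑ S, α S * g S - g A ≤ ∑ j, y j * (g (insert j A) - g A) := by
  calc ∑ S, α S * g S - g A = ∑ S, α S * (g S - g A) := by
        simp only [mul_sub, sum_sub_distrib, ← sum_mul, hα1, one_mul]
    _ ≤ ∑ S, α S * ∑ j ∈ S, (g (insert j A) - g A) := by
        refine sum_le_sum fun S _ => mul_le_mul_of_nonneg_left ?_ (hα0 S)
        linarith [hmono S (A ∪ S) subset_union_right,
          sub_le_sum_insert_sub_of_submodular g hsub A S]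
    _ = ∑ j, y j * (g (insert j A) - g A) := by
        rw [← sum_marginal_mul]
        simp only [hαy]

lemma one_div_mul_add_le_sum_mul_insert
    (hmono : ∀ S T : Finset J, S ⊆ T → g S ≤ g T)
    (hsub : ∀ S T : Finset J, g (S ∪ T) + g (S ∩ T) ≤ g S + g T)
    {b : ℝ} (hb : 0 < b) {x : J → ℝ} (hx : ∑ j, x j = 1)
    {α : Finset J → ℝ} (hα0 : ∀ S, 0 ≤ α S) (hα1 : ∑ S, α S = 1)
    (hαx : ∀ j, ∑ S ∈ univ.filter (fun S => j ∈ S), α S = b * x j) (A : Finset J) :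
    1 / b * ∑ S, α S * g S + (1 - 1 / b) * g A ≤ ∑ j, x j * g (insert j A) := by
  have hgain := sum_mul_sub_le_sum_marginal_mul_gain g hmono hsub hα0 hα1 hαx A
  simp only [mul_assoc, ← mul_sum] at hgain
  have hsplit : ∑ j, x j * g (insert j A) = g A + ∑ j, x j * (g (insert j A) - g A) := by
    simp only [mul_sub, sum_sub_distrib, ← sum_mul, hx, one_mul, add_sub_cancel]
  have : 1 / b * (∑ S, α S * g S - g A) ≤ ∑ j, x j * (g (insert j A) - g A) := by
    rwa [one_div, inv_mul_le_iff₀ hb]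
  linarith

end SetFunction

lemma one_sub_one_sub_pow_mul_le {a : ℕ → ℝ} {p M : ℝ} (hp : p ≤ 1) (h0 : 0 ≤ a 0)
    (hstep : ∀ k, p * M + (1 - p) * a k ≤ a (k + 1)) (k : ℕ) :
    (1 - (1 - p) ^ k) * M ≤ a k := by
  induction k with
  | zero => simpa using h0
  | succ k ih =>
    calc (1 - (1 - p) ^ (k + 1)) * M = p * M + (1 - p) * ((1 - (1 - p) ^ k) * M) := by ring
      _ ≤ p * M + (1 - p) * a k := by gcongr
      _ ≤ a (k + 1) := hstep k

lemma univ_image_cons {J : Type*} [DecidableEq J] {n : ℕ} (j : J) (t : Fin n → J) :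
    univ.image (Fin.cons j t : Fin (n + 1) → J) = insert j (univ.image t) :=
  coe_injective (by push_cast [Set.image_univ, Fin.range_cons]; rfl)

section Sampling

variable {J : Type*} [Fintype J] [DecidableEq J] (x : J → ℝ)

/-- `E[f({J_1,…,J_k})]` for i.i.d. `J_ι` with `Pr[J_ι = j] = x j`. -/
noncomputable def sampleExpectation (f : Finset J → ℝ) (k : ℕ) : ℝ :=
  ∑ t : Fin k → J, (∏ ι, x (t ι)) * f (univ.image t)

lemma sampleExpectation_succ (f : Finset J → ℝ) (k : ℕ) :
    sampleExpectation x f (k + 1) = sampleExpectation x (fun A => ∑ j, x j * f (insert j A)) k := by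
  rw [sampleExpectation, ← (Fin.consEquiv fun _ => J).sum_comp, Fintype.sum_prod_type,
    sum_comm]
  refine sum_congr rfl fun t _ => ?_
  simp only [Fin.consEquiv, Equiv.coe_fn_mk, Fin.prod_univ_succ, Fin.cons_zero, Fin.cons_succ,
    univ_image_cons, mul_sum]
  exact sum_congr rfl fun j _ => by ring

lemma sampleExpectation_affine (hx : ∑ j, x j = 1) (f : Finset J → ℝ) (c d : ℝ) (k : ℕ) :
    sampleExpectation x (fun A => c + d * f A) k = c + d * sampleExpectation x f k := by
  simp only [sampleExpectation, mul_add, sum_add_distrib, ← sum_mul, ← Fintype.sum_pow, hx,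
    one_pow, one_mul, mul_sum]
  exact congrArg _ (sum_congr rfl fun t _ => by ring)

variable {x}

lemma sampleExpectation_mono (hx0 : ∀ j, 0 ≤ x j) {f f' : Finset J → ℝ} (h : ∀ A, f A ≤ f' A)
    (k : ℕ) : sampleExpectation x f k ≤ sampleExpectation x f' k :=
  sum_le_sum fun _ _ => mul_le_mul_of_nonneg_left (h _) (prod_nonneg fun _ _ => hx0 _)

lemma sampleExpectation_nonneg (hx0 : ∀ j, 0 ≤ x j) {f : Finset J → ℝ} (hf : ∀ A, 0 ≤ f A)
    (k : ℕ) : 0 ≤ sampleExpectation x f k :=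
  sum_nonneg fun _ _ => mul_nonneg (prod_nonneg fun _ _ => hx0 _) (hf _)

theorem one_sub_pow_mul_le_sampleExpectation {g : Finset J → ℝ} (hnn : ∀ S, 0 ≤ g S)
    (hmono : ∀ S T : Finset J, S ⊆ T → g S ≤ g T)
    (hsub : ∀ S T : Finset J, g (S ∪ T) + g (S ∩ T) ≤ g S + g T)
    {b : ℝ} (hb : 1 ≤ b) (hx0 : ∀ j, 0 ≤ x j) (hx : ∑ j, x j = 1)
    {α : Finset J → ℝ} (hα0 : ∀ S, 0 ≤ α S) (hα1 : ∑ S, α S = 1)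
    (hαx : ∀ j, ∑ S ∈ univ.filter (fun S => j ∈ S), α S = b * x j) (k : ℕ) :
    (1 - (1 - 1 / b) ^ k) * ∑ S, α S * g S ≤ sampleExpectation x g k := by
  refine one_sub_one_sub_pow_mul_le (div_le_one_of_le₀ hb (by linarith))
    (sampleExpectation_nonneg hx0 hnn 0) (fun n => ?_) k
  rw [sampleExpectation_succ, ← sampleExpectation_affine x hx]
  exact sampleExpectation_mono hx0
    (one_div_mul_add_le_sum_mul_insert g hmono hsub (by linarith) hx hα0 hα1 hαx) n

end Sampling

lemma mul_concaveClosure_le {J : Type*} [Fintype J] [DecidableEq J] {g : Finset J → ℝ}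
    {y : J → ℝ} {c L : ℝ} (hc : 0 ≤ c) (hL : 0 ≤ L)
    (h : ∀ α : Finset J → ℝ, (∀ S, 0 ≤ α S) → ∑ S, α S = 1 →
      (∀ j, ∑ S ∈ univ.filter (fun S => j ∈ S), α S = y j) → c * ∑ S, α S * g S ≤ L) :
    c * concaveClosure g y ≤ L := by
  rw [concaveClosure, ← smul_eq_mul, ← Real.sSup_smul_of_nonneg hc]
  refine Real.sSup_le ?_ hL
  rintro _ ⟨_, ⟨α, hα0, hα1, hαy, rfl⟩, rfl⟩
  exact h α hα0 hα1 hαy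

theorem stmt_14_general {J : Type*} [Fintype J] [DecidableEq J]
    (g : Finset J → ℝ) (hnn : ∀ S, 0 ≤ g S)
    (hmono : ∀ S T : Finset J, S ⊆ T → g S ≤ g T)
    (hsub : ∀ S T : Finset J, g (S ∪ T) + g (S ∩ T) ≤ g S + g T)
    (b : ℕ) (hb : 1 ≤ b)
    (x : J → ℝ) (hx : ∀ j, 0 ≤ x j ∧ x j ≤ 1 / (b : ℝ)) (hsum : ∑ j, x j = 1)
    (ℓ : ℕ) :
    -- E[g(U)] where U = {J_1,…,J_ℓ}, J_ι i.i.d. with Pr[J_ι = j] = x_j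
    ∑ t : Fin ℓ → J, (∏ ι, x (t ι)) * g (Finset.univ.image t)
      ≥ (1 - Real.exp (-1 + (1 - 1 / (b : ℝ)) ^ ℓ)) *
          concaveClosure g (fun j => (b : ℝ) * x j) := by
  have hb' : (1 : ℝ) ≤ b := by exact_mod_cast hb
  have hx0 : ∀ j, 0 ≤ x j := fun j => (hx j).1
  set r := (1 - 1 / (b : ℝ)) ^ ℓ
  have hr1 : r ≤ 1 :=
    pow_le_one₀ (sub_nonneg.2 (div_le_one_of_le₀ hb' (by linarith))) (by simp)
  have hr_le_exp : r ≤ Real.exp (-1 + r) := by linarith [Real.add_one_le_exp (-1 + r)]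
  have hexp_le_one : Real.exp (-1 + r) ≤ 1 := Real.exp_le_one_iff.2 (by linarith)
  refine mul_concaveClosure_le (by linarith) (sampleExpectation_nonneg hx0 hnn ℓ)
    fun α hα0 hα1 hαx => ?_
  calc (1 - Real.exp (-1 + r)) * ∑ S, α S * g S ≤ (1 - r) * ∑ S, α S * g S :=
        mul_le_mul_of_nonneg_right (by linarith)
          (sum_nonneg fun S _ => mul_nonneg (hα0 S) (hnn S))
    _ ≤ sampleExpectation x g ℓ :=
        one_sub_pow_mul_le_sampleExpectation hnn hmono hsub hb' hx0 hsum hα0 hα1 hαx ℓ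

theorem stmt_14 {J : Type*} [Fintype J] [DecidableEq J]
    (g : Finset J → ℝ) (hnn : ∀ S, 0 ≤ g S) (h0 : g ∅ = 0)
    (hmono : ∀ S T : Finset J, S ⊆ T → g S ≤ g T)
    (hsub : ∀ S T : Finset J, g (S ∪ T) + g (S ∩ T) ≤ g S + g T)
    (b : ℕ) (hb : 1 ≤ b)
    (x : J → ℝ) (hx : ∀ j, 0 ≤ x j ∧ x j ≤ 1 / (b : ℝ)) (hsum : ∑ j, x j = 1)
    (ℓ : ℕ) (hℓ : 1 ≤ ℓ) :
    -- E[g(U)] where U = {J_1,…,J_ℓ}, J_ι i.i.d. with Pr[J_ι = j] = x_j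
    ∑ t : Fin ℓ → J, (∏ ι, x (t ι)) * g (Finset.univ.image t)
      ≥ (1 - Real.exp (-1 + (1 - 1 / (b : ℝ)) ^ ℓ)) *
          concaveClosure g (fun j => (b : ℝ) * x j) :=
  stmt_14_general g hnn hmono hsub b hb x hx hsum ℓ
end

section
/- Let J be a finite set, let g : 2^J → ℝ be a nonnegative monotone submodular set function, let x ∈ [0,1]^J, and let c ∈ [0,1]. Then G(c·x) ≥ (1 − e^{−c}) · g⁺(x), where G is the multilinear extension of g and g⁺ is its concave closure. -/
/-- The multilinear extension `G` of a set function `g` on a finite ground set. -/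
noncomputable def multilinearExt {J : Type*} [Fintype J] [DecidableEq J]
    (g : Finset J → ℝ) (x : J → ℝ) : ℝ :=
  ∑ S : Finset J, g S * (∏ j ∈ S, x j) * ∏ j ∈ Sᶜ, (1 - x j)

/-!
Write `𝔼_y F` for the expectation of `F` at the random set containing each `j` independently
with probability `y j`, so that `G y = 𝔼_y g`, and let `V = ∑ α_S g(S)` for a distribution `α`
with marginals `x`. Submodularity gives `V - g A ≤ ∑_j x_j (g (A + j) - g A)` for every `A`.
Adding to `A` an independent random set with probabilities `δ x` adds exactly the element `j`
with probability at least `δ x_j (1 - δ)^|J|`, so `𝔼_{δx} g (A ∪ ·) ≥ g A + ε (V - g A)` with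
`ε = δ (1 - δ)^|J|`: each such step shrinks `V - 𝔼 g` by the factor `1 - ε`. After `n` steps
with `δ = c / n` the random set has probabilities `1 - (1 - δ x_j)^n ≤ c x_j`, whence
`G (c x) ≥ (1 - (1 - ε)^n) V ≥ (1 - exp (-c (1 - c/n)^|J|)) V`; let `n → ∞` and take the
supremum over `α`.
-/

open Finset Filter Topology

namespace SetFunction

variable {J : Type*} [DecidableEq J]

/-- The expectation of `F` at the random subset of `u` that contains each `j ∈ u` independently
with probability `y j`. -/
noncomputable def bernoulliExpect (u : Finset J) (y : J → ℝ) (F : Finset J → ℝ) : ℝ :=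
  ∑ S ∈ u.powerset, (∏ j ∈ S, y j) * (∏ j ∈ u \ S, (1 - y j)) * F S

variable {u : Finset J} {y : J → ℝ} {F F' : Finset J → ℝ}

@[simp]
lemma bernoulliExpect_empty : bernoulliExpect ∅ y F = F ∅ := by
  simp [bernoulliExpect]

lemma bernoulliExpect_insert {i : J} (hi : i ∉ u) :
    bernoulliExpect (insert i u) y F =
      (1 - y i) * bernoulliExpect u y F + y i * bernoulliExpect u y (fun S => F (insert i S)) := by
  rw [bernoulliExpect, sum_powerset_insert hi, bernoulliExpect, bernoulliExpect, mul_sum, mul_sum]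
  congr 1 <;> refine sum_congr rfl fun S hS => ?_
  · have hiS : i ∉ S := fun h => hi (mem_powerset.1 hS h)
    rw [insert_sdiff_of_notMem u hiS, prod_insert fun h => hi (mem_sdiff.1 h).1]
    ring
  · have hiS : i ∉ S := fun h => hi (mem_powerset.1 hS h)
    rw [prod_insert hiS, insert_sdiff_insert, sdiff_insert,
      erase_eq_of_notMem fun h => hi (mem_sdiff.1 h).1]
    ring

lemma bernoulliExpect_add :
    bernoulliExpect u y (fun S => F S + F' S) =
      bernoulliExpect u y F + bernoulliExpect u y F' := by
  simp only [bernoulliExpect, mul_add, sum_add_distrib]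

lemma bernoulliExpect_const_mul (a : ℝ) :
    bernoulliExpect u y (fun S => a * F S) = a * bernoulliExpect u y F := by
  simp only [bernoulliExpect, mul_sum]
  exact sum_congr rfl fun S _ => by ring

lemma bernoulliExpect_const (a : ℝ) : bernoulliExpect u y (fun _ => a) = a := by
  induction u using Finset.induction_on with
  | empty => simp
  | insert i u hi ih => rw [bernoulliExpect_insert hi, ih]; ring

lemma bernoulliExpect_mono (hy : ∀ j, 0 ≤ y j ∧ y j ≤ 1) (h : ∀ S, F S ≤ F' S) :
    bernoulliExpect u y F ≤ bernoulliExpect u y F' :=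
  sum_le_sum fun S _ => mul_le_mul_of_nonneg_left (h S) <|
    mul_nonneg (prod_nonneg fun j _ => (hy j).1) (prod_nonneg fun j _ => sub_nonneg.2 (hy j).2)

lemma le_bernoulliExpect {a : ℝ} (hy : ∀ j, 0 ≤ y j ∧ y j ≤ 1) (h : ∀ S, a ≤ F S) :
    a ≤ bernoulliExpect u y F := by
  simpa only [bernoulliExpect_const] using bernoulliExpect_mono (u := u) hy h

lemma bernoulliExpect_mono_prob {z : J → ℝ} (hy : ∀ j, 0 ≤ y j ∧ y j ≤ 1)
    (hz : ∀ j, 0 ≤ z j ∧ z j ≤ 1) (hyz : ∀ j, y j ≤ z j) (hF : Monotone F) :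
    bernoulliExpect u y F ≤ bernoulliExpect u z F := by
  induction u using Finset.induction_on generalizing F with
  | empty => simp
  | insert i u hi ih =>
    have hFi : Monotone fun S => F (insert i S) := fun S T h => hF (insert_subset_insert i h)
    have hgain : bernoulliExpect u z F ≤ bernoulliExpect u z (fun S => F (insert i S)) :=
      bernoulliExpect_mono hz fun S => hF (subset_insert i S)
    rw [bernoulliExpect_insert hi, bernoulliExpect_insert hi]
    nlinarith [ih hF, ih hFi, hy i, hyz i]

/-- The union of independent random sets with inclusion probabilities `q` and `p` is the random
set with inclusion probabilities `q + p - q p`. -/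
lemma bernoulliExpect_union (q p : J → ℝ) (F : Finset J → ℝ) :
    bernoulliExpect u q (fun A => bernoulliExpect u p fun B => F (A ∪ B)) =
      bernoulliExpect u (fun j => q j + p j - q j * p j) F := by
  induction u using Finset.induction_on generalizing F with
  | empty => simp
  | insert i u hi ih =>
    simp only [bernoulliExpect_insert hi, union_insert, insert_union, insert_idem]
    simp only [bernoulliExpect_add, bernoulliExpect_const_mul, ← ih]
    ring

/-- Only the outcomes `∅` and `{j}` are counted; each `{j}` has probability
`p j ∏_{k ≠ j} (1 - p k) ≥ p j (1 - δ)^#u`. -/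
lemma add_sum_le_bernoulliExpect {p : J → ℝ} {δ : ℝ} (hp : ∀ j, 0 ≤ p j ∧ p j ≤ δ)
    (hδ : δ ≤ 1) (hF : Monotone F) :
    F ∅ + (1 - δ) ^ #u * ∑ j ∈ u, p j * (F {j} - F ∅) ≤ bernoulliExpect u p F := by
  induction u using Finset.induction_on with
  | empty => simp
  | insert i u hi ih =>
    have hp01 : ∀ j, 0 ≤ p j ∧ p j ≤ 1 := fun j => ⟨(hp j).1, (hp j).2.trans hδ⟩
    have hgain : ∀ j, 0 ≤ p j * (F {j} - F ∅) := fun j =>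
      mul_nonneg (hp j).1 (sub_nonneg.2 (hF (empty_subset _)))
    have hsingle : F {i} ≤ bernoulliExpect u p fun S => F (insert i S) :=
      le_bernoulliExpect hp01 fun S => hF (singleton_subset_iff.2 (mem_insert_self i S))
    have hrest : 0 ≤ (1 - δ) ^ #u * ∑ j ∈ u, p j * (F {j} - F ∅) :=
      mul_nonneg (pow_nonneg (by linarith [(hp i).1]) _) (sum_nonneg fun j _ => hgain j)
    have hpow : (1 - δ) ^ #u * (1 - δ) ≤ 1 := by
      rw [← pow_succ]; exact pow_le_one₀ (by linarith) (by linarith [(hp i).1, (hp i).2])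
    rw [bernoulliExpect_insert hi, card_insert_of_notMem hi, sum_insert hi, pow_succ]
    nlinarith [mul_le_mul_of_nonneg_left ih (sub_nonneg.2 (hp01 i).2),
      mul_le_mul_of_nonneg_left hsingle (hp i).1, mul_le_mul_of_nonneg_right hpow (hgain i),
      mul_le_mul_of_nonneg_right (by linarith [(hp i).2] : 1 - δ ≤ 1 - p i) hrest]

variable {g : Finset J → ℝ}

lemma insert_sub_le_insert_sub_of_subset (hmono : Monotone g)
    (hsub : ∀ S T : Finset J, g (S ∪ T) + g (S ∩ T) ≤ g S + g T)
    {A B : Finset J} (hAB : A ⊆ B) (j : J) :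
    g (insert j B) - g B ≤ g (insert j A) - g A := by
  by_cases hjB : j ∈ B
  · rw [insert_eq_self.2 hjB, sub_self, sub_nonneg]
    exact hmono (subset_insert j A)
  · have hunion : insert j A ∪ B = insert j B := by rw [insert_union, union_eq_right.2 hAB]
    have hinter : insert j A ∩ B = A := by
      rw [insert_inter_of_notMem hjB, inter_eq_left.2 hAB]
    have := hsub (insert j A) B
    rw [hunion, hinter] at this
    linarith

lemma apply_union_le_add_sum (hmono : Monotone g)
    (hsub : ∀ S T : Finset J, g (S ∪ T) + g (S ∩ T) ≤ g S + g T) (A T : Finset J) :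
    g (A ∪ T) ≤ g A + ∑ j ∈ T, (g (insert j A) - g A) := by
  induction T using Finset.induction_on with
  | empty => simp
  | insert j T hj ih =>
    have := insert_sub_le_insert_sub_of_subset hmono hsub
      (subset_union_left (s₁ := A) (s₂ := T)) j
    rw [union_insert, sum_insert hj]
    linarith

section Fintype

variable [Fintype J]

lemma multilinearExt_eq_bernoulliExpect (y : J → ℝ) :
    multilinearExt g y = bernoulliExpect univ y g := by
  rw [multilinearExt, bernoulliExpect, powerset_univ]
  exact sum_congr rfl fun S _ => by rw [compl_eq_univ_sdiff]; ring

lemma sum_mul_sub_le_sum_mul_marginal (hmono : Monotone g)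
    (hsub : ∀ S T : Finset J, g (S ∪ T) + g (S ∩ T) ≤ g S + g T)
    {x : J → ℝ} {α : Finset J → ℝ} (hα0 : ∀ S, 0 ≤ α S) (hα1 : ∑ S, α S = 1)
    (hmarg : ∀ j, ∑ S ∈ univ.filter (fun S : Finset J => j ∈ S), α S = x j) (A : Finset J) :
    ∑ S, α S * g S - g A ≤ ∑ j, x j * (g (insert j A) - g A) := by
  have hswap : ∑ j, x j * (g (insert j A) - g A) =
      ∑ T, α T * ∑ j ∈ T, (g (insert j A) - g A) := by
    simp only [← hmarg, sum_mul, mul_sum, sum_filter]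
    rw [sum_comm]
    exact sum_congr rfl fun T _ => by simp only [ite_mul, zero_mul, sum_ite_mem, univ_inter]
  have hexpand : ∑ S, α S * g S - g A = ∑ T, α T * (g T - g A) := by
    simp only [mul_sub, sum_sub_distrib, ← sum_mul, hα1, one_mul]
  rw [hswap, hexpand]
  refine sum_le_sum fun T _ => mul_le_mul_of_nonneg_left ?_ (hα0 T)
  linarith [apply_union_le_add_sum hmono hsub A T,
    hmono (subset_union_right (s₁ := A) (s₂ := T))]

lemma one_sub_one_sub_pow_mem {a : ℝ} (ha : a ∈ unitInterval) (m : ℕ) :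
    1 - (1 - a) ^ m ∈ unitInterval :=
  Set.Icc.mem_iff_one_sub_mem.1 <|
    unitInterval.submonoid.pow_mem (Set.Icc.mem_iff_one_sub_mem.1 ha) m

lemma mul_one_sub_pow_le_one {δ : ℝ} (hδ0 : 0 ≤ δ) (hδ1 : δ ≤ 1) (n : ℕ) :
    δ * (1 - δ) ^ n ≤ 1 :=
  mul_le_one₀ hδ1 (pow_nonneg (sub_nonneg.2 hδ1) n)
    (pow_le_one₀ (sub_nonneg.2 hδ1) (sub_le_self 1 hδ0))

variable {x : J → ℝ} {V δ : ℝ}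

lemma add_mul_sub_le_bernoulliExpect_union (hmono : Monotone g)
    (hx : ∀ j, 0 ≤ x j ∧ x j ≤ 1) (hV : ∀ A, V - g A ≤ ∑ j, x j * (g (insert j A) - g A))
    (hδ0 : 0 ≤ δ) (hδ1 : δ ≤ 1) (A : Finset J) :
    g A + δ * (1 - δ) ^ Fintype.card J * (V - g A) ≤
      bernoulliExpect univ (fun j => δ * x j) (fun B => g (A ∪ B)) := by
  have hp : ∀ j, 0 ≤ δ * x j ∧ δ * x j ≤ δ := fun j =>
    ⟨mul_nonneg hδ0 (hx j).1, mul_le_of_le_one_right hδ0 (hx j).2⟩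
  have hlow := add_sum_le_bernoulliExpect (u := univ) (F := fun B => g (A ∪ B)) hp hδ1
    fun S T h => hmono (union_subset_union_right h)
  simp only [union_empty, union_singleton, card_univ, mul_assoc, ← mul_sum] at hlow
  have hpow : 0 ≤ (1 - δ) ^ Fintype.card J := pow_nonneg (sub_nonneg.2 hδ1) _
  nlinarith [mul_le_mul_of_nonneg_left (hV A) (mul_nonneg hδ0 hpow)]

lemma sub_bernoulliExpect_union_le (hmono : Monotone g) (hx : ∀ j, 0 ≤ x j ∧ x j ≤ 1)
    (hV : ∀ A, V - g A ≤ ∑ j, x j * (g (insert j A) - g A)) (hδ0 : 0 ≤ δ) (hδ1 : δ ≤ 1)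
    (hy : ∀ j, 0 ≤ y j ∧ y j ≤ 1) :
    V - bernoulliExpect univ (fun j => y j + δ * x j - y j * (δ * x j)) g ≤
      (1 - δ * (1 - δ) ^ Fintype.card J) * (V - bernoulliExpect univ y g) := by
  set ε := δ * (1 - δ) ^ Fintype.card J
  have hstep : (1 - ε) * bernoulliExpect univ y g + ε * V ≤
      bernoulliExpect univ (fun j => y j + δ * x j - y j * (δ * x j)) g := by
    rw [← bernoulliExpect_union, ← bernoulliExpect_const_mul,
      ← bernoulliExpect_const (u := univ) (y := y) (ε * V), ← bernoulliExpect_add]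
    exact bernoulliExpect_mono hy fun A => by
      linarith [add_mul_sub_le_bernoulliExpect_union hmono hx hV hδ0 hδ1 A]
  linarith

lemma sub_bernoulliExpect_iterate_le (hmono : Monotone g) (h0 : 0 ≤ g ∅)
    (hx : ∀ j, 0 ≤ x j ∧ x j ≤ 1) (hV : ∀ A, V - g A ≤ ∑ j, x j * (g (insert j A) - g A))
    (hδ0 : 0 ≤ δ) (hδ1 : δ ≤ 1) (m : ℕ) :
    V - bernoulliExpect univ (fun j => 1 - (1 - δ * x j) ^ m) g ≤
      (1 - δ * (1 - δ) ^ Fintype.card J) ^ m * V := by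
  have hy : ∀ m : ℕ, ∀ j, 1 - (1 - δ * x j) ^ m ∈ unitInterval :=
    fun m j => one_sub_one_sub_pow_mem (unitInterval.mul_mem ⟨hδ0, hδ1⟩ (hx j)) m
  induction m with
  | zero =>
    simpa using h0.trans (le_bernoulliExpect (hy 0) fun S => hmono (empty_subset S))
  | succ m ih =>
    have hε : 0 ≤ 1 - δ * (1 - δ) ^ Fintype.card J :=
      sub_nonneg.2 (mul_one_sub_pow_le_one hδ0 hδ1 _)
    have hnext : (fun j => 1 - (1 - δ * x j) ^ (m + 1)) = fun j =>
        (1 - (1 - δ * x j) ^ m) + δ * x j - (1 - (1 - δ * x j) ^ m) * (δ * x j) := by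
      funext j; ring
    rw [hnext, pow_succ', mul_assoc]
    exact (sub_bernoulliExpect_union_le hmono hx hV hδ0 hδ1 (hy m)).trans
      (mul_le_mul_of_nonneg_left ih hε)

lemma one_sub_exp_mul_le_bernoulliExpect (hmono : Monotone g) (h0 : 0 ≤ g ∅)
    (hx : ∀ j, 0 ≤ x j ∧ x j ≤ 1) (hV : ∀ A, V - g A ≤ ∑ j, x j * (g (insert j A) - g A))
    (hV0 : 0 ≤ V) (hδ0 : 0 ≤ δ) (hδ1 : δ ≤ 1) {n : ℕ} (hnδ : n * δ ≤ 1) :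
    (1 - Real.exp (-(n * δ * (1 - δ) ^ Fintype.card J))) * V ≤
      bernoulliExpect univ (fun j => n * δ * x j) g := by
  set ε := δ * (1 - δ) ^ Fintype.card J
  have hexp : (1 - ε) ^ n ≤ Real.exp (-(n * δ * (1 - δ) ^ Fintype.card J)) :=
    calc (1 - ε) ^ n ≤ Real.exp (-ε) ^ n :=
          pow_le_pow_left₀ (sub_nonneg.2 (mul_one_sub_pow_le_one hδ0 hδ1 _))
            (Real.one_sub_le_exp_neg ε) n
      _ = Real.exp (-(n * δ * (1 - δ) ^ Fintype.card J)) := by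
          rw [← Real.exp_nat_mul, mul_neg, mul_assoc]
  have hbernoulli : ∀ j, 1 - (1 - δ * x j) ^ n ≤ n * δ * x j := fun j => by
    have h := one_add_mul_le_pow (by nlinarith [hx j] : -2 ≤ -(δ * x j)) n
    rw [← sub_eq_add_neg] at h
    linarith
  have hmono_prob := bernoulliExpect_mono_prob (u := univ)
    (fun j => one_sub_one_sub_pow_mem (unitInterval.mul_mem ⟨hδ0, hδ1⟩ (hx j)) n)
    (fun j => unitInterval.mul_mem ⟨by positivity, hnδ⟩ (hx j)) hbernoulli hmono
  nlinarith [sub_bernoulliExpect_iterate_le hmono h0 hx hV hδ0 hδ1 n,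
    mul_le_mul_of_nonneg_right hexp hV0]

lemma one_sub_exp_mul_le_multilinearExt (hmono : Monotone g) (h0 : 0 ≤ g ∅)
    (hx : ∀ j, 0 ≤ x j ∧ x j ≤ 1) (hV : ∀ A, V - g A ≤ ∑ j, x j * (g (insert j A) - g A))
    (hV0 : 0 ≤ V) {c : ℝ} (hc : 0 ≤ c ∧ c ≤ 1) :
    (1 - Real.exp (-c)) * V ≤ multilinearExt g (fun j => c * x j) := by
  have hn : ∀ n : ℕ, 1 ≤ n →
      (1 - Real.exp (-(c * (1 - c / n) ^ Fintype.card J))) * V ≤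
        multilinearExt g (fun j => c * x j) := fun n hn => by
    have hnc : (n : ℝ) * (c / n) = c := mul_div_cancel₀ _ (by positivity)
    have hcn : c / n ≤ 1 := div_le_one_of_le₀ (hc.2.trans (by exact_mod_cast hn)) n.cast_nonneg
    have := one_sub_exp_mul_le_bernoulliExpect hmono h0 hx hV hV0 (by positivity [hc.1]) hcn
      (hnc ▸ hc.2)
    rwa [hnc, ← multilinearExt_eq_bernoulliExpect] at this
  have hlim : Tendsto (fun n : ℕ => (1 - Real.exp (-(c * (1 - c / n) ^ Fintype.card J))) * V)
      atTop (𝓝 ((1 - Real.exp (-c)) * V)) := by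
    have hcont : Continuous fun t : ℝ =>
        (1 - Real.exp (-(c * (1 - t) ^ Fintype.card J))) * V := by
      fun_prop
    simpa [Function.comp_def] using
      (hcont.tendsto 0).comp (tendsto_const_div_atTop_nhds_zero_nat c)
  exact le_of_tendsto hlim (eventually_atTop.2 ⟨1, hn⟩)

end Fintype

end SetFunction

open SetFunction in
theorem stmt_16 {J : Type*} [Fintype J] [DecidableEq J]
    (g : Finset J → ℝ) (hnn : ∀ S, 0 ≤ g S)
    (hmono : ∀ S T : Finset J, S ⊆ T → g S ≤ g T)
    (hsub : ∀ S T : Finset J, g (S ∪ T) + g (S ∩ T) ≤ g S + g T)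
    (x : J → ℝ) (hx : ∀ j, 0 ≤ x j ∧ x j ≤ 1)
    (c : ℝ) (hc : 0 ≤ c ∧ c ≤ 1) :
    multilinearExt g (fun j => c * x j) ≥ (1 - Real.exp (-c)) * concaveClosure g x := by
  have hmono' : Monotone g := fun S T h => hmono S T h
  have hK : 0 ≤ 1 - Real.exp (-c) := sub_nonneg.2 (Real.exp_le_one_iff.2 (neg_nonpos.2 hc.1))
  have hG : 0 ≤ multilinearExt g (fun j => c * x j) := by
    rw [multilinearExt_eq_bernoulliExpect]
    exact le_bernoulliExpect (fun j => unitInterval.mul_mem hc (hx j))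
      fun S => (hnn ∅).trans (hmono' (empty_subset S))
  rw [ge_iff_le, concaveClosure, ← smul_eq_mul, ← Real.sSup_smul_of_nonneg hK]
  refine Real.sSup_le ?_ hG
  rintro _ ⟨_, ⟨α, hα0, hα1, hmarg, rfl⟩, rfl⟩
  exact one_sub_exp_mul_le_multilinearExt hmono' (hnn ∅) hx
    (sum_mul_sub_le_sum_mul_marginal hmono' hsub hα0 hα1 hmarg)
    (sum_nonneg fun S _ => mul_nonneg (hα0 S) (hnn S)) hc
end

section
/- Let J be a finite set, let g : 2^J → ℝ be a nonnegative monotone submodular set function, and let x ∈ [0,1]^J. Define g*(x) = min_{S⊆J} ( g(S) + Σ_{j∈J} x_j · (g(S ∪ {j}) − g(S)) ). Then g*(x) ≥ g⁺(x), where g⁺ is the concave closure of g. -/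
/-- `g*(x) = min_{S ⊆ J} (g(S) + Σ_j x_j (g(S ∪ {j}) − g(S)))`. -/
noncomputable def gStar {J : Type*} [Fintype J] [DecidableEq J]
    (g : Finset J → ℝ) (x : J → ℝ) : ℝ :=
  ⨅ S : Finset J, (g S + ∑ j, x j * (g (insert j S) - g S))

open Finset

section SetFunction

variable {J : Type*} [DecidableEq J] {g : Finset J → ℝ}

theorem union_le_add_sum_insert_sub (hmono : Monotone g)
    (hsub : ∀ S T : Finset J, g (S ∪ T) + g (S ∩ T) ≤ g S + g T) (S T : Finset J) :
    g (S ∪ T) ≤ g S + ∑ j ∈ T, (g (insert j S) - g S) := by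
  induction T using Finset.induction with
  | empty => simp
  | @insert a T ha ih =>
    have hunion : (S ∪ T) ∪ insert a S = S ∪ insert a T := by
      ext j; simp only [mem_union, mem_insert]; tauto
    have hinter : S ⊆ (S ∪ T) ∩ insert a S :=
      subset_inter subset_union_left (subset_insert a S)
    have := hsub (S ∪ T) (insert a S)
    rw [hunion] at this
    rw [sum_insert ha]
    linarith [hmono hinter]

theorem le_add_sum_insert_sub (hmono : Monotone g)
    (hsub : ∀ S T : Finset J, g (S ∪ T) + g (S ∩ T) ≤ g S + g T) (S T : Finset J) :
    g T ≤ g S + ∑ j ∈ T, (g (insert j S) - g S) :=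
  (hmono subset_union_right).trans (union_le_add_sum_insert_sub hmono hsub S T)

theorem insert_sub_nonneg (hmono : Monotone g) (S : Finset J) (j : J) :
    0 ≤ g (insert j S) - g S :=
  sub_nonneg.mpr (hmono (subset_insert j S))

end SetFunction

theorem sum_mul_sum_mem_eq_sum_marginal {J : Type*} [Fintype J] [DecidableEq J]
    (α : Finset J → ℝ) (x f : J → ℝ)
    (hmarg : ∀ j, ∑ T ∈ univ.filter (fun T : Finset J => j ∈ T), α T = x j) :
    ∑ T : Finset J, α T * ∑ j ∈ T, f j = ∑ j, x j * f j := by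
  simp_rw [← hmarg, sum_mul, mul_sum]
  exact sum_comm' fun T j => by simp

theorem gStar_nonneg {J : Type*} [Fintype J] [DecidableEq J] {g : Finset J → ℝ}
    (hnn : ∀ S, 0 ≤ g S) (hmono : Monotone g) {x : J → ℝ} (hx : ∀ j, 0 ≤ x j) :
    0 ≤ gStar g x :=
  le_ciInf fun S => add_nonneg (hnn S)
    (sum_nonneg fun j _ => mul_nonneg (hx j) (insert_sub_nonneg hmono S j))

theorem stmt_17 {J : Type*} [Fintype J] [DecidableEq J]
    (g : Finset J → ℝ) (hnn : ∀ S, 0 ≤ g S)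
    (hmono : ∀ S T : Finset J, S ⊆ T → g S ≤ g T)
    (hsub : ∀ S T : Finset J, g (S ∪ T) + g (S ∩ T) ≤ g S + g T)
    (x : J → ℝ) (hx : ∀ j, 0 ≤ x j ∧ x j ≤ 1) :
    gStar g x ≥ concaveClosure g x := by
  have hmono' : Monotone g := fun S T h => hmono S T h
  -- `Real.sSup_le` also covers the junk value `sSup ∅ = 0`, hence the need for `0 ≤ gStar g x`.
  refine Real.sSup_le ?_ (gStar_nonneg hnn hmono' fun j => (hx j).1)
  rintro v ⟨α, hα0, hα1, hmarg, rfl⟩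
  refine le_ciInf fun S => ?_
  calc ∑ T, α T * g T
      ≤ ∑ T, α T * (g S + ∑ j ∈ T, (g (insert j S) - g S)) :=
        sum_le_sum fun T _ => mul_le_mul_of_nonneg_left
          (le_add_sum_insert_sub hmono' hsub S T) (hα0 T)
    _ = g S + ∑ j, x j * (g (insert j S) - g S) := by
        simp_rw [mul_add, sum_add_distrib, ← sum_mul, hα1, one_mul,
          sum_mul_sum_mem_eq_sum_marginal α x _ hmarg]
end
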